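/- arXiv:1704.05515 — 3 statements merged into one kernel-verified Lean document; each statement's English description precedes it below -/
import Mathlib

section
/- Let 1 → R → F → G → 1 be a presentation of a group G, where F is a free group on a finite set and R is a normal subgroup of F. Then the torsion subgroup of the abelian group R/[R,F] is isomorphic to the torsion subgroup of H₂(G, ℤ). -/
/-- The subgroup `[ker π, F]` of the free group `F`. -/
def relComm {X G : Type} [Group G] (π : FreeGroup X →* G) : Subgroup (FreeGroup X) :=
  ⁅π.ker, (⊤ : Subgroup (FreeGroup X))⁆

instance {X G : Type} [Group G] (π : FreeGroup X →* G) : (relComm π).Normal :=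
  Subgroup.commutator_normal _ _

/-- `R/[R,F]`, realized as the image of `R = ker π` in `F/[R,F]`. -/
def relCoinv {X G : Type} [Group G] (π : FreeGroup X →* G) :
    Subgroup (FreeGroup X ⧸ relComm π) :=
  Subgroup.map (QuotientGroup.mk' (relComm π)) π.ker

/-- The kernel of the canonical presentation `FreeGroup G → G`. -/
def hopfKer (G : Type) [Group G] : Subgroup (FreeGroup G) :=
  (FreeGroup.lift (id : G → G)).ker

/-- `H₂(G, ℤ)` via Hopf's formula `(K ∩ [F,F]) / [K,F]` for the canonical
presentation `FreeGroup G → G`. -/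
def H2Z (G : Type) [Group G] :
    Subgroup (FreeGroup G ⧸ relComm (FreeGroup.lift (id : G → G))) :=
  Subgroup.map (QuotientGroup.mk' (relComm (FreeGroup.lift (id : G → G))))
    (hopfKer G ⊓ commutator (FreeGroup G))

section CommInstances

open scoped commutatorElement

variable {F : Type} [Group F]

theorem comm_of_map (N L : Subgroup F) [N.Normal]
    (h : ∀ a ∈ L, ∀ b ∈ L, ⁅a, b⁆ ∈ N)
    (x y : ↥(L.map (QuotientGroup.mk' N))) : x * y = y * x := by
  obtain ⟨x, hx⟩ := x
  obtain ⟨y, hy⟩ := y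
  obtain ⟨a, ha, rfl⟩ := hx
  obtain ⟨b, hb, rfl⟩ := hy
  apply Subtype.ext
  show QuotientGroup.mk' N a * QuotientGroup.mk' N b
      = QuotientGroup.mk' N b * QuotientGroup.mk' N a
  rw [← map_mul, ← map_mul, QuotientGroup.mk'_eq_mk']
  refine ⟨⁅b⁻¹, a⁻¹⁆, h _ (inv_mem hb) _ (inv_mem ha), ?_⟩
  simp only [commutatorElement_def]
  group

instance {X G : Type} [Group G] (π : FreeGroup X →* G) : CommGroup ↥(relCoinv π) :=
  { (inferInstance : Group ↥(relCoinv π)) with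
    mul_comm := comm_of_map (relComm π) π.ker
      (fun a ha b _ => Subgroup.commutator_mem_commutator ha (Subgroup.mem_top b)) }

instance (G : Type) [Group G] : CommGroup ↥(H2Z G) :=
  { (inferInstance : Group ↥(H2Z G)) with
    mul_comm := comm_of_map _ _
      (fun a ha b _ => Subgroup.commutator_mem_commutator ha.1 (Subgroup.mem_top b)) }

end CommInstances

/-!
The torsion of `R/[R,F]` already lies in `(R ∩ [F,F])/[R,F]`: if `r ∈ R` and `rⁿ ∈ [R,F] ≤ [F,F]`,
then `r ∈ [F,F]` because the abelianization of a free group is free abelian, hence torsion-free.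
By Hopf's argument, `(R ∩ [F,F])/[R,F]` does not depend on the presentation: lifts of the
identity of `G` in both directions induce mutually inverse maps, since any two lifts differ by
elements of `R`, which are central modulo `[R,F]` and hence invisible on commutators.
-/

open QuotientGroup Function
open scoped commutatorElement

theorem commutatorElement_mul_mul_of_mem_center {G : Type*} [Group G] {a b c d : G}
    (hc : c ∈ Subgroup.center G) (hd : d ∈ Subgroup.center G) : ⁅a * c, b * d⁆ = ⁅a, b⁆ := by
  have hc' (g : G) : ⁅c, g⁆ = 1 :=
    commutatorElement_eq_one_iff_commute.mpr (Subgroup.mem_center_iff.mp hc g).symm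
  have hd' (g : G) : ⁅g, d⁆ = 1 :=
    commutatorElement_eq_one_iff_commute.mpr (Subgroup.mem_center_iff.mp hd g)
  rw [commutatorElement_mul_left_eq_conj_mul, hc', commutatorElement_mul_right_eq_mul_conj, hd']
  group

theorem QuotientGroup.mk_mem_center_of_mem {F : Type*} [Group F] {N : Subgroup F} [N.Normal]
    {n : F} (hn : n ∈ N) : mk' ⁅N, ⊤⁆ n ∈ Subgroup.center (F ⧸ ⁅N, ⊤⁆) := by
  rw [← Subgroup.mem_comap, ← Subgroup.upperCentralSeriesStep_eq_comap_center]
  exact fun y => Subgroup.commutator_mem_commutator hn (Subgroup.mem_top y)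

namespace FreeGroup

-- `FreeAbelianGroup X` is `Additive (Abelianization (FreeGroup X))` by definition.
instance isMulTorsionFree_abelianization (X : Type*) :
    IsMulTorsionFree (Abelianization (FreeGroup X)) :=
  Injective.isMulTorsionFree (M := Abelianization (FreeGroup X))
    (AddEquiv.toMultiplicative (FreeAbelianGroup.equivFinsupp X)).toMonoidHom
    (AddEquiv.toMultiplicative (FreeAbelianGroup.equivFinsupp X)).injective

theorem mem_commutator_of_pow_mem {X : Type*} {x : FreeGroup X} {n : ℕ} (hn : n ≠ 0)
    (h : x ^ n ∈ commutator (FreeGroup X)) : x ∈ commutator (FreeGroup X) := by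
  rw [← Abelianization.ker_of, MonoidHom.mem_ker] at h ⊢
  exact pow_left_injective hn (by simpa using h)

theorem exists_lift_of_surjective {X F G : Type*} [Group F] [Group G] (π₁ : FreeGroup X →* G)
    {π₂ : F →* G} (hπ₂ : Surjective π₂) : ∃ φ : FreeGroup X →* F, π₂.comp φ = π₁ :=
  ⟨lift (surjInv hπ₂ ∘ π₁ ∘ of), ext_hom _ _ fun x => by simp [surjInv_eq hπ₂]⟩

end FreeGroup

namespace CommGroup

variable {A B : Type*} [CommGroup A] [CommGroup B]

theorem map_torsion_of_injective {f : A →* B} (hf : Injective f)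
    (hrange : torsion B ≤ f.range) : (torsion A).map f = torsion B := by
  refine le_antisymm (map_torsion_le f) fun b hb => ?_
  obtain ⟨a, rfl⟩ := hrange hb
  exact ⟨a, hf.isOfFinOrder_iff.mp hb, rfl⟩

noncomputable def torsionEquivOfInjective (f : A →* B) (hf : Injective f)
    (hrange : torsion B ≤ f.range) : torsion A ≃* torsion B :=
  ((torsion A).equivMapOfInjective f hf).trans
    (MulEquiv.subgroupCongr (map_torsion_of_injective hf hrange))

def torsionCongr (e : A ≃* B) : torsion A ≃* torsion B :=
  (e.subgroupMap (torsion A)).trans (MulEquiv.subgroupCongr e.map_torsion)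

end CommGroup

section Hopf

variable {F G : Type*} [Group F] [Group G]

/-- Hopf's `(R ∩ [F,F])/[R,F]` for `R = ker π`. -/
def hopfH2 (π : F →* G) : Subgroup (F ⧸ ⁅π.ker, (⊤ : Subgroup F)⁆) :=
  (π.ker ⊓ commutator F).map (mk' ⁅π.ker, (⊤ : Subgroup F)⁆)

theorem hopfH2_le_center (π : F →* G) :
    hopfH2 π ≤ Subgroup.center (F ⧸ ⁅π.ker, (⊤ : Subgroup F)⁆) := by
  rintro _ ⟨r, hr, rfl⟩
  exact mk_mem_center_of_mem hr.1

instance (π : F →* G) : CommGroup (hopfH2 π) :=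
  { (inferInstance : Group (hopfH2 π)) with
    mul_comm := fun x y =>
      Subtype.ext (Subgroup.mem_center_iff.mp (hopfH2_le_center π x.2) y).symm }

variable {F₁ F₂ : Type*} [Group F₁] [Group F₂] {π₁ : F₁ →* G} {π₂ : F₂ →* G}

theorem ker_le_comap_ker_of_comp_eq {φ : F₁ →* F₂} (h : π₂.comp φ = π₁) :
    π₁.ker ≤ π₂.ker.comap φ := by
  rw [MonoidHom.comap_ker, h]

theorem commutator_ker_le_comap_of_comp_eq {φ : F₁ →* F₂} (h : π₂.comp φ = π₁) :
    ⁅π₁.ker, (⊤ : Subgroup F₁)⁆ ≤ ⁅π₂.ker, (⊤ : Subgroup F₂)⁆.comap φ := by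
  rw [← Subgroup.map_le_iff_le_comap, Subgroup.map_commutator]
  exact Subgroup.commutator_mono (Subgroup.map_le_iff_le_comap.mpr
    (ker_le_comap_ker_of_comp_eq h)) le_top

theorem map_hopfH2_le_of_comp_eq {φ : F₁ →* F₂} (h : π₂.comp φ = π₁) :
    (hopfH2 π₁).map (QuotientGroup.map _ _ φ (commutator_ker_le_comap_of_comp_eq h)) ≤
      hopfH2 π₂ := by
  rintro _ ⟨_, ⟨r, ⟨hr, hr'⟩, rfl⟩, rfl⟩
  refine ⟨φ r, ⟨ker_le_comap_ker_of_comp_eq h hr, ?_⟩, rfl⟩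
  have hcomm : (commutator F₁).map φ ≤ commutator F₂ := by
    rw [map_commutator_eq]
    exact Subgroup.commutator_mono le_top le_top
  exact hcomm ⟨r, hr', rfl⟩

theorem mk_apply_eq_of_mem_commutator {φ φ' : F₁ →* F₂} (h : π₂.comp φ = π₁)
    (h' : π₂.comp φ' = π₁) {r : F₁} (hr : r ∈ commutator F₁) :
    mk' ⁅π₂.ker, (⊤ : Subgroup F₂)⁆ (φ r) = mk' ⁅π₂.ker, (⊤ : Subgroup F₂)⁆ (φ' r) := by
  set mk := mk' ⁅π₂.ker, (⊤ : Subgroup F₂)⁆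
  have hcentral (x : F₁) :
      (mk (φ' x))⁻¹ * mk (φ x) ∈ Subgroup.center (F₂ ⧸ ⁅π₂.ker, (⊤ : Subgroup F₂)⁆) := by
    rw [← map_inv, ← map_mul]
    refine mk_mem_center_of_mem ?_
    rw [MonoidHom.mem_ker, map_mul, map_inv, ← MonoidHom.comp_apply, ← MonoidHom.comp_apply, h,
      h', inv_mul_cancel]
  suffices commutator F₁ ≤ (mk.comp φ).eqLocus (mk.comp φ') from this hr
  rw [commutator_def, Subgroup.commutator_le]
  intro g₁ _ g₂ _
  have hlift (x : F₁) : mk (φ x) = mk (φ' x) * ((mk (φ' x))⁻¹ * mk (φ x)) :=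
    (mul_inv_cancel_left _ _).symm
  show mk (φ ⁅g₁, g₂⁆) = mk (φ' ⁅g₁, g₂⁆)
  simp only [map_commutatorElement]
  rw [hlift g₁, hlift g₂, commutatorElement_mul_mul_of_mem_center (hcentral g₁) (hcentral g₂)]

variable (π₁ π₂) in
def hopfMap {φ : F₁ →* F₂} (h : π₂.comp φ = π₁) : hopfH2 π₁ →* hopfH2 π₂ :=
  (Subgroup.inclusion (map_hopfH2_le_of_comp_eq h)).comp
    ((QuotientGroup.map _ _ φ (commutator_ker_le_comap_of_comp_eq h)).subgroupMap (hopfH2 π₁))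

theorem hopfMap_eq_id {φ : F₁ →* F₁} (h : π₁.comp φ = π₁) :
    hopfMap π₁ π₁ h = MonoidHom.id (hopfH2 π₁) := by
  ext ⟨_, r, hr, rfl⟩
  exact mk_apply_eq_of_mem_commutator h (MonoidHom.comp_id π₁) hr.2

theorem hopfMap_comp {F₃ : Type*} [Group F₃] {π₃ : F₃ →* G} {φ : F₁ →* F₂} {ψ : F₂ →* F₃}
    (hφ : π₂.comp φ = π₁) (hψ : π₃.comp ψ = π₂) :
    (hopfMap π₂ π₃ hψ).comp (hopfMap π₁ π₂ hφ) =
      hopfMap π₁ π₃ (φ := ψ.comp φ) (by rw [← MonoidHom.comp_assoc, hψ, hφ]) := by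
  ext ⟨_, r, hr, rfl⟩
  rfl

def hopfEquiv {φ : F₁ →* F₂} {ψ : F₂ →* F₁} (hφ : π₂.comp φ = π₁)
    (hψ : π₁.comp ψ = π₂) : hopfH2 π₁ ≃* hopfH2 π₂ :=
  MonoidHom.toMulEquiv (hopfMap π₁ π₂ hφ) (hopfMap π₂ π₁ hψ)
    ((hopfMap_comp hφ hψ).trans (hopfMap_eq_id _))
    ((hopfMap_comp hψ hφ).trans (hopfMap_eq_id _))

end Hopf

section Presentation

variable {X G : Type} [Group G]

theorem hopfH2_le_relCoinv (π : FreeGroup X →* G) : hopfH2 π ≤ relCoinv π :=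
  Subgroup.map_mono inf_le_left

theorem mem_hopfH2_of_isOfFinOrder {π : FreeGroup X →* G} {q : FreeGroup X ⧸ relComm π}
    (hq : q ∈ relCoinv π) (hfin : IsOfFinOrder q) : q ∈ hopfH2 π := by
  obtain ⟨r, hr, rfl⟩ := hq
  obtain ⟨n, hn, hpow⟩ := isOfFinOrder_iff_pow_eq_one.mp hfin
  rw [← map_pow, QuotientGroup.mk'_apply, QuotientGroup.eq_one_iff] at hpow
  have hcomm : relComm π ≤ commutator (FreeGroup X) := Subgroup.commutator_mono le_top le_top
  exact ⟨r, ⟨hr, FreeGroup.mem_commutator_of_pow_mem hn.ne' (hcomm hpow)⟩, rfl⟩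

noncomputable def torsionHopfH2EquivTorsionRelCoinv (π : FreeGroup X →* G) :
    CommGroup.torsion (hopfH2 π) ≃* CommGroup.torsion (relCoinv π) :=
  CommGroup.torsionEquivOfInjective (Subgroup.inclusion (hopfH2_le_relCoinv π))
    (Subgroup.inclusion_injective _) fun ⟨q, hq⟩ hfin =>
      ⟨⟨q, mem_hopfH2_of_isOfFinOrder hq ((relCoinv π).subtype.isOfFinOrder hfin)⟩, rfl⟩

end Presentation

theorem torsion_relCoinv_iso_torsion_H2_general
    {X G : Type} [Group G] (π : FreeGroup X →* G)
    (hπ : Function.Surjective π) :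
    Nonempty (↥(CommGroup.torsion ↥(relCoinv π)) ≃* ↥(CommGroup.torsion ↥(H2Z G))) := by
  set π₀ : FreeGroup G →* G := FreeGroup.lift id
  have hπ₀ : Surjective π₀ := fun g => ⟨FreeGroup.of g, FreeGroup.lift_apply_of⟩
  obtain ⟨φ, hφ⟩ := FreeGroup.exists_lift_of_surjective π₀ hπ
  obtain ⟨ψ, hψ⟩ := FreeGroup.exists_lift_of_surjective π hπ₀
  -- `H2Z G` is `hopfH2 π₀` by definition.
  exact ⟨(torsionHopfH2EquivTorsionRelCoinv π).symm.trans
    (CommGroup.torsionCongr (hopfEquiv hψ hφ))⟩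

theorem torsion_relCoinv_iso_torsion_H2
    {X G : Type} [Finite X] [Group G] (π : FreeGroup X →* G)
    (hπ : Function.Surjective π) :
    Nonempty (↥(CommGroup.torsion ↥(relCoinv π)) ≃* ↥(CommGroup.torsion ↥(H2Z G))) :=
  torsion_relCoinv_iso_torsion_H2_general π hπ
end

section
/- Quasirationality does not depend on the choice of presentation: if 1 → R → F → G → 1 and 1 → R' → F' → G → 1 are two presentations of the same group G, with F and F' free groups on finite sets and R, R' normal subgroups, then R/[R,F] is torsion-free if and only if R'/[R',F'] is torsion-free. -/
/-- A monoid is torsion-free if no nontrivial element has finite order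
(the meaning `Monoid.IsTorsionFree` had in the older Mathlib). -/
def Monoid.IsTorsionFree (G : Type*) [Monoid G] : Prop :=
  ∀ g : G, g ≠ 1 → ¬IsOfFinOrder g

/-!
If `r ∈ R` has `rⁿ ∈ [R,F]`, then `r ∈ [F,F]` because the abelianization of `F` is free abelian.
Lifting the two presentations against each other gives maps `φ : F → F'` and `ψ : F' → F` over
`G`, which carry `R` and `[R,F]` into their primed counterparts. If `R'/[R',F']` is torsion-free,
`φ r ∈ [R',F']`, so `ψ (φ r) ∈ [R,F]`. But an endomorphism of `F` over `G` changes elements by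
factors from `R`, which are central modulo `[R,F]`, so it fixes `[F,F]` modulo `[R,F]`;
hence `r ≡ ψ (φ r) ≡ 1` modulo `[R,F]`.
-/

open scoped commutatorElement

instance Abelianization.isMulTorsionFree_freeGroup (X : Type*) :
    IsMulTorsionFree (Abelianization (FreeGroup X)) :=
  let e := (FreeAbelianGroup.equivFinsupp X).toMultiplicative
  Function.Injective.isMulTorsionFree e.toMonoidHom e.injective

theorem mem_commutator_of_pow_mem {G : Type*} [Group G] [IsMulTorsionFree (Abelianization G)]
    {g : G} {n : ℕ} (hn : n ≠ 0) (h : g ^ n ∈ commutator G) : g ∈ commutator G := by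
  rw [← Abelianization.ker_of, MonoidHom.mem_ker] at h ⊢
  rwa [map_pow, pow_eq_one_iff_left hn] at h

theorem commutatorElement_mul_left_of_mem_center {G : Type*} [Group G] {z : G}
    (hz : z ∈ Subgroup.center G) (a b : G) : ⁅z * a, b⁆ = ⁅a, b⁆ := by
  have hz' := Subgroup.mem_center_iff.mp hz
  simp only [commutatorElement_def, mul_inv_rev]
  calc z * a * b * (a⁻¹ * z⁻¹) * b⁻¹
      = z * (a * b * a⁻¹) * z⁻¹ * b⁻¹ := by group
    _ = a * b * a⁻¹ * b⁻¹ := by rw [← hz']; group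

theorem commutatorElement_mul_of_mem_center {G : Type*} [Group G] {z w : G}
    (hz : z ∈ Subgroup.center G) (hw : w ∈ Subgroup.center G) (a b : G) :
    ⁅z * a, w * b⁆ = ⁅a, b⁆ := by
  rw [commutatorElement_mul_left_of_mem_center hz, ← commutatorElement_inv,
    commutatorElement_mul_left_of_mem_center hw, commutatorElement_inv]

theorem commutator_le_eqLocus_of_mul_inv_mem_center {G H : Type*} [Group G] [Group H]
    (α β : G →* H) (h : ∀ g, α g * (β g)⁻¹ ∈ Subgroup.center H) :
    commutator G ≤ α.eqLocus β := by
  rw [commutator_def, Subgroup.commutator_le]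
  intro g₁ _ g₂ _
  have hα : ∀ g, α g = α g * (β g)⁻¹ * β g := fun g => by group
  show α _ = β _
  rw [map_commutatorElement, map_commutatorElement, hα g₁, hα g₂,
    commutatorElement_mul_of_mem_center (h g₁) (h g₂)]

theorem exists_comp_eq_of_surjective {X G H : Type*} [Group G] [Group H]
    (π : FreeGroup X →* G) {π' : H →* G} (hπ' : Function.Surjective π') :
    ∃ φ : FreeGroup X →* H, π'.comp φ = π :=
  ⟨FreeGroup.lift (Function.surjInv hπ' ∘ π ∘ FreeGroup.of),
    FreeGroup.ext_hom _ _ fun x => by simp [Function.surjInv_eq]⟩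

section relComm

variable {X G : Type} [Group G] (π : FreeGroup X →* G)

theorem relComm_le_commutator : relComm π ≤ commutator (FreeGroup X) :=
  Subgroup.commutator_mono le_top le_top

theorem mk_mem_center_of_mem_ker {r : FreeGroup X} (hr : r ∈ π.ker) :
    (r : FreeGroup X ⧸ relComm π) ∈ Subgroup.center _ := by
  rw [Subgroup.mem_center_iff]
  intro q
  induction q using QuotientGroup.induction_on with
  | _ f =>
    rw [← QuotientGroup.mk_mul, ← QuotientGroup.mk_mul, QuotientGroup.eq]
    have h : (f * r)⁻¹ * (r * f) = ⁅r⁻¹, f⁻¹⁆ := by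
      simp only [commutatorElement_def]; group
    rw [h]
    exact Subgroup.commutator_mem_commutator (inv_mem hr) (Subgroup.mem_top _)

theorem mk_map_eq_mk_of_mem_commutator {θ : FreeGroup X →* FreeGroup X} (hθ : π.comp θ = π)
    {r : FreeGroup X} (hr : r ∈ commutator (FreeGroup X)) :
    (θ r : FreeGroup X ⧸ relComm π) = r := by
  refine commutator_le_eqLocus_of_mul_inv_mem_center
    ((QuotientGroup.mk' (relComm π)).comp θ) (QuotientGroup.mk' (relComm π)) (fun f => ?_) hr
  have hf : θ f * f⁻¹ ∈ π.ker := by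
    rw [MonoidHom.mem_ker, map_mul, map_inv, ← MonoidHom.comp_apply, hθ, mul_inv_cancel]
  simpa using mk_mem_center_of_mem_ker π hf

theorem isTorsionFree_relCoinv_iff : Monoid.IsTorsionFree (relCoinv π) ↔
    ∀ r ∈ π.ker, ∀ n ≠ 0, r ^ n ∈ relComm π → r ∈ relComm π := by
  have hpow : ∀ (r : FreeGroup X) (n : ℕ),
      (r : FreeGroup X ⧸ relComm π) ^ n = 1 ↔ r ^ n ∈ relComm π := fun r n => by
    rw [← QuotientGroup.mk_pow, QuotientGroup.eq_one_iff]
  constructor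
  · intro h r hr n hn hrn
    let g : relCoinv π := ⟨r, r, hr, rfl⟩
    have hg : g ^ n = 1 := Subtype.ext ((hpow r n).mpr hrn)
    by_contra hr'
    refine h g (fun h1 => hr' ?_) (isOfFinOrder_iff_pow_eq_one.mpr ⟨n, Nat.pos_of_ne_zero hn, hg⟩)
    exact (QuotientGroup.eq_one_iff r).mp (congrArg Subtype.val h1)
  · rintro h ⟨_, r, hr, rfl⟩ hg hfin
    obtain ⟨n, hn, hgn⟩ := isOfFinOrder_iff_pow_eq_one.mp hfin
    have hrn : r ^ n ∈ relComm π := (hpow r n).mp (congrArg Subtype.val hgn)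
    exact hg (Subtype.ext ((QuotientGroup.eq_one_iff r).mpr (h r hr n hn.ne' hrn)))

variable {π} {X' : Type} {π' : FreeGroup X' →* G}

theorem map_relComm_le {φ : FreeGroup X →* FreeGroup X'} (hφ : π'.comp φ = π) :
    (relComm π).map φ ≤ relComm π' := by
  rw [relComm, Subgroup.map_commutator]
  refine Subgroup.commutator_mono ?_ le_top
  rw [Subgroup.map_le_iff_le_comap, MonoidHom.comap_ker, hφ]

theorem isTorsionFree_relCoinv_of_comp_eq {φ : FreeGroup X →* FreeGroup X'}
    {ψ : FreeGroup X' →* FreeGroup X} (hφ : π'.comp φ = π) (hψ : π.comp ψ = π')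
    (h' : Monoid.IsTorsionFree (relCoinv π')) : Monoid.IsTorsionFree (relCoinv π) := by
  rw [isTorsionFree_relCoinv_iff] at h' ⊢
  intro r hr n hn hrn
  have hφr : φ r ∈ relComm π' := by
    refine h' (φ r) ?_ n hn ?_
    · rwa [MonoidHom.mem_ker, ← MonoidHom.comp_apply, hφ]
    · exact map_pow φ r n ▸ map_relComm_le hφ ⟨_, hrn, rfl⟩
  have hψφr : ψ (φ r) ∈ relComm π := map_relComm_le hψ ⟨_, hφr, rfl⟩
  have hfix : ((ψ.comp φ) r : FreeGroup X ⧸ relComm π) = r :=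
    mk_map_eq_mk_of_mem_commutator π (by rw [← MonoidHom.comp_assoc, hψ, hφ])
      (mem_commutator_of_pow_mem hn (relComm_le_commutator π hrn))
  rwa [← QuotientGroup.eq_one_iff, ← hfix, QuotientGroup.eq_one_iff]

end relComm

theorem quasirationality_independent_of_presentation_general
    {X X' G : Type} [Group G]
    (π : FreeGroup X →* G) (π' : FreeGroup X' →* G)
    (hπ : Function.Surjective π) (hπ' : Function.Surjective π') :
    Monoid.IsTorsionFree ↥(relCoinv π) ↔ Monoid.IsTorsionFree ↥(relCoinv π') := by
  obtain ⟨φ, hφ⟩ := exists_comp_eq_of_surjective π hπ'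
  obtain ⟨ψ, hψ⟩ := exists_comp_eq_of_surjective π' hπ
  exact ⟨isTorsionFree_relCoinv_of_comp_eq hψ hφ, isTorsionFree_relCoinv_of_comp_eq hφ hψ⟩

theorem quasirationality_independent_of_presentation
    {X X' G : Type} [Finite X] [Finite X'] [Group G]
    (π : FreeGroup X →* G) (π' : FreeGroup X' →* G)
    (hπ : Function.Surjective π) (hπ' : Function.Surjective π') :
    Monoid.IsTorsionFree ↥(relCoinv π) ↔ Monoid.IsTorsionFree ↥(relCoinv π') :=
  quasirationality_independent_of_presentation_general π π' hπ hπ'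
end

section
/- (Crowell–Lyndon exact sequence) Let 1 → R → F → G → 1 be a presentation of a group G with F a free group on a finite set X and R a normal subgroup of F. Let R̄ = R/[R,R] be the relation module, regarded as a ℤ[G]-module via the conjugation action of F on R (which factors through G on R̄). Then there is an exact sequence of ℤ[G]-modules 0 → R̄ → ℤ[G]^{(X)} → IG → 0, where ℤ[G]^{(X)} is the free ℤ[G]-module on X, IG is the augmentation ideal of the group ring ℤ[G], the map ℤ[G]^{(X)} → IG sends the basis element corresponding to x ∈ X to π(x) − 1, and the map R̄ → ℤ[G]^{(X)} is induced by free differential calculus. -/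
/-!
STATEMENT 6 (Crowell–Lyndon exact sequence): for a finite-type presentation
`1 → R → F → G → 1` (`F` free on a finite set `X`, `R = ker π`), there is an
exact sequence of `ℤ[G]`-modules `0 → R̄ → ℤ[G]^(X) → IG → 0`, where
`R̄ = R/[R,R]` is the relation module (with `G` acting through conjugation of
`F` on `R`), the map `ℤ[G]^(X) → IG ⊆ ℤ[G]` sends the basis element `e_x` to
`π(x) - 1`, and `R̄ → ℤ[G]^(X)` is given by free differential (Fox) calculus.
-/

variable {X G : Type} [Group G]

/-- Functoriality of abelianization on automorphisms. -/
def abAut {H : Type} [Group H] : MulAut H →* MulAut (Abelianization H) where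
  toFun e := e.abelianizationCongr
  map_one' := by
    ext x
    induction x using QuotientGroup.induction_on with
    | _ z => rfl
  map_mul' e₁ e₂ := by
    ext x
    induction x using QuotientGroup.induction_on with
    | _ z => rfl

/-- The action of `F` on the abelianization of `R = ker π`, induced by conjugation. -/
def actF (π : FreeGroup X →* G) : FreeGroup X →* MulAut (Abelianization ↥π.ker) :=
  abAut.comp MulAut.conjNormal

theorem ker_le_ker_actF (π : FreeGroup X →* G) : π.ker ≤ (actF π).ker := by
  intro f hf
  rw [MonoidHom.mem_ker]
  ext x
  induction x using QuotientGroup.induction_on with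
  | _ z =>
    show Abelianization.of (MulAut.conjNormal f z) = Abelianization.of z
    have hz : MulAut.conjNormal f z = ⟨f, hf⟩ * z * ⟨f, hf⟩⁻¹ := by
      apply Subtype.ext
      simp [MulAut.conjNormal_apply]
    rw [hz, map_mul, map_mul, map_inv, mul_right_comm]
    simp

/-- The conjugation action of `G` on the relation module. -/
noncomputable def actG (π : FreeGroup X →* G) (hπ : Function.Surjective π) :
    G →* MulAut (Abelianization ↥π.ker) :=
  (π.liftOfRightInverse (Function.surjInv hπ) (Function.rightInverse_surjInv hπ))
    ⟨actF π, ker_le_ker_actF π⟩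

/-- The relation module `R̄ = R/[R,R]` of the presentation `π`, as a
representation of `G` over `ℤ`; `g` acts by `g • r[R,R] = (f r f⁻¹)[R,R]`
for any lift `f ∈ F` of `g`. -/
noncomputable def relRep (π : FreeGroup X →* G) (hπ : Function.Surjective π) :
    Representation ℤ G (Additive (Abelianization ↥π.ker)) where
  toFun g := ((MonoidHom.toAdditive (actG π hπ g).toMonoidHom)).toIntLinearMap
  map_one' := by
    ext x
    show (MonoidHom.toAdditive (MulEquiv.toMonoidHom ((actG π hπ) 1))).toIntLinearMap x = x
    rw [map_one]
    rfl
  map_mul' g₁ g₂ := by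
    ext x
    show (MonoidHom.toAdditive (MulEquiv.toMonoidHom ((actG π hπ) (g₁ * g₂)))).toIntLinearMap x
        = (MonoidHom.toAdditive (MulEquiv.toMonoidHom ((actG π hπ) g₁))).toIntLinearMap
            ((MonoidHom.toAdditive (MulEquiv.toMonoidHom ((actG π hπ) g₂))).toIntLinearMap x)
    rw [map_mul]
    rfl

/-- The augmentation `ℤ[G] → ℤ`. -/
noncomputable def aug (G : Type) [Group G] : MonoidAlgebra ℤ G →ₐ[ℤ] ℤ :=
  MonoidAlgebra.lift ℤ ℤ G 1

/-- The map `ℤ[G]^(X) → ℤ[G]`, `e_x ↦ π(x) - 1`; its image is the augmentation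
ideal `IG` and its kernel is the image of the relation module. -/
noncomputable def dMap (π : FreeGroup X →* G) :
    (X →₀ MonoidAlgebra ℤ G) →ₗ[MonoidAlgebra ℤ G] MonoidAlgebra ℤ G :=
  Finsupp.linearCombination (MonoidAlgebra ℤ G)
    fun x => (MonoidAlgebra.of ℤ G (π (FreeGroup.of x)) : MonoidAlgebra ℤ G) - 1

/-!
The free (Fox) derivative `∂ : F → ℤ[G]^(X)` is the crossed homomorphism with `∂ x = e_x`. It
satisfies `d (∂ f) = π f - 1`, which shows that the image of `d` is `IG`; on `R` it is a
`G`-equivariant homomorphism into an abelian group, hence induces `θ : R̄ → ker d`.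
For exactness pick a set-theoretic section `s` of `π` with `s 1 = 1`. The ℤ-linear map
`Ψ (g e_x) = [s(g) x s(g π(x))⁻¹]` satisfies `Ψ (∂ f) = [f s(π f)⁻¹]`, so `Ψ ∘ θ = id`, and
`θ ∘ Ψ + E ∘ d = id` for `E g = ∂ (s g)`; thus `θ` is injective with image `ker d`.
-/

theorem FreeGroup.crossedHom_eq_zero {k M : Type*} [CommSemiring k] [AddCommGroup M]
    [Module k M] (ρ : Representation k (FreeGroup X) M) {d : FreeGroup X → M}
    (hmul : ∀ u v, d (u * v) = d u + ρ u (d v)) (hof : ∀ x, d (FreeGroup.of x) = 0) :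
    d = 0 := by
  have hone : d 1 = 0 := by simpa using hmul 1 1
  funext f
  induction f using FreeGroup.induction_on with
  | C1 => exact hone
  | of x => exact hof x
  | inv_of x _ => simpa [hof, hone] using (hmul (FreeGroup.of x)⁻¹ (FreeGroup.of x)).symm
  | mul u v hu hv => simp [hmul, hu, hv]

noncomputable def foxAction : G →* MulAut (Multiplicative (X →₀ MonoidAlgebra ℤ G)) :=
  (MulAutMultiplicative _).symm.toMonoidHom.comp
    ((DistribMulAction.toAddAut (MonoidAlgebra ℤ G)ˣ _).comp (MonoidAlgebra.of ℤ G).toHomUnits)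

section Fox

variable (π : FreeGroup X →* G)

/-- A crossed homomorphism `F → M` is the same as a lift of `π` to `M ⋊ G`. -/
noncomputable def foxHom :
    FreeGroup X →* Multiplicative (X →₀ MonoidAlgebra ℤ G) ⋊[foxAction] G :=
  FreeGroup.lift fun x => ⟨.ofAdd (Finsupp.single x 1), π (.of x)⟩

noncomputable def foxDeriv (f : FreeGroup X) : X →₀ MonoidAlgebra ℤ G :=
  (foxHom π f).left.toAdd

theorem foxHom_right (f : FreeGroup X) : (foxHom π f).right = π f := by
  have : SemidirectProduct.rightHom.comp (foxHom π) = π := by ext; simp [foxHom]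
  exact DFunLike.congr_fun this f

theorem foxDeriv_of (x : X) : foxDeriv π (.of x) = Finsupp.single x 1 := by
  simp [foxDeriv, foxHom]

theorem foxDeriv_mul (u v : FreeGroup X) :
    foxDeriv π (u * v) = foxDeriv π u + MonoidAlgebra.of ℤ G (π u) • foxDeriv π v := by
  simp only [foxDeriv, map_mul, SemidirectProduct.mul_left, foxHom_right]
  rfl

theorem foxDeriv_mul_inv {u w : FreeGroup X} (h : π u = π w) :
    foxDeriv π (u * w⁻¹) = foxDeriv π u - foxDeriv π w := by
  have := foxDeriv_mul π (u * w⁻¹) w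
  rw [inv_mul_cancel_right, map_mul, map_inv, h, mul_inv_cancel, map_one, one_smul] at this
  rw [this, add_sub_cancel_right]

theorem foxDeriv_conj {w : FreeGroup X} (hw : w ∈ π.ker) (u : FreeGroup X) :
    foxDeriv π (u * w * u⁻¹) = MonoidAlgebra.of ℤ G (π u) • foxDeriv π w := by
  rw [foxDeriv_mul_inv π (by rw [map_mul, MonoidHom.mem_ker.1 hw, mul_one]), foxDeriv_mul,
    add_sub_cancel_left]

theorem dMap_foxDeriv (f : FreeGroup X) :
    dMap π (foxDeriv π f) = MonoidAlgebra.of ℤ G (π f) - 1 := by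
  have := FreeGroup.crossedHom_eq_zero
    ((DistribMulAction.toModuleEnd ℤ (MonoidAlgebra ℤ G)).comp ((MonoidAlgebra.of ℤ G).comp π))
    (d := fun f => dMap π (foxDeriv π f) - (MonoidAlgebra.of ℤ G (π f) - 1)) ?_ ?_
  · exact sub_eq_zero.1 (congrFun this f)
  · intro u v
    change _ - _ = _ - _ + MonoidAlgebra.of ℤ G (π u) * (_ - _)
    rw [foxDeriv_mul, map_add, map_smul, smul_eq_mul, map_mul, map_mul]
    noncomm_ring
  · intro x
    simp [foxDeriv_of, dMap]

end Fox

theorem aug_of (g : G) : aug G (MonoidAlgebra.of ℤ G g) = 1 :=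
  MonoidAlgebra.lift_of _ _

theorem of_sub_one_mem_ker_aug (g : G) : MonoidAlgebra.of ℤ G g - 1 ∈ RingHom.ker (aug G) := by
  rw [RingHom.mem_ker, map_sub, aug_of, map_one, sub_self]

theorem ker_aug_eq_span :
    RingHom.ker (aug G) = Ideal.span (Set.range fun g : G => MonoidAlgebra.of ℤ G g - 1) := by
  set I := Ideal.span (Set.range fun g : G => MonoidAlgebra.of ℤ G g - 1)
  refine le_antisymm (fun b hb => ?_) (Ideal.span_le.2 ?_)
  · have key : ∀ b, b - aug G b • 1 ∈ I := by
      intro b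
      induction b using MonoidAlgebra.induction_on with
      | of g => rw [aug_of, one_smul]; exact Ideal.subset_span ⟨g, rfl⟩
      | add a b ha hb => simpa [add_smul, add_sub_add_comm] using add_mem ha hb
      | smul n a ha => simpa [smul_sub, smul_smul] using Submodule.smul_of_tower_mem _ n ha
    simpa [RingHom.mem_ker.1 hb] using key b
  · rintro _ ⟨g, rfl⟩
    exact of_sub_one_mem_ker_aug g

theorem range_dMap_eq_ker_aug (π : FreeGroup X →* G) (hπ : Function.Surjective π) :
    LinearMap.range (dMap π) = RingHom.ker (aug G) := by
  apply le_antisymm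
  · rw [dMap, Finsupp.range_linearCombination, Submodule.span_le]
    rintro _ ⟨x, rfl⟩
    exact of_sub_one_mem_ker_aug _
  · rw [ker_aug_eq_span, Ideal.span_le]
    rintro _ ⟨g, rfl⟩
    obtain ⟨f, rfl⟩ := hπ g
    exact ⟨foxDeriv π f, dMap_foxDeriv π f⟩

section RelationModule

variable (π : FreeGroup X →* G)

noncomputable def relClass (r : FreeGroup X) (hr : r ∈ π.ker) : Additive (Abelianization π.ker) :=
  .ofMul (Abelianization.of ⟨r, hr⟩)

theorem relClass_mul {r₁ r₂ : FreeGroup X} (h₁ : r₁ ∈ π.ker) (h₂ : r₂ ∈ π.ker) :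
    relClass π (r₁ * r₂) (mul_mem h₁ h₂) = relClass π r₁ h₁ + relClass π r₂ h₂ :=
  rfl

theorem relClass_congr {r r' : FreeGroup X} (h : r = r') (hr : r ∈ π.ker) (hr' : r' ∈ π.ker) :
    relClass π r hr = relClass π r' hr' := by
  subst h; rfl

theorem relModule_addHom_ext {M : Type*} [AddZeroClass M]
    {f g : Additive (Abelianization π.ker) →+ M}
    (h : ∀ r hr, f (relClass π r hr) = g (relClass π r hr)) : f = g := by
  ext a
  induction a using QuotientGroup.induction_on with
  | _ r => exact h r r.2

theorem relRep_relClass (hπ : Function.Surjective π) (u : FreeGroup X) {w : FreeGroup X}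
    (hw : w ∈ π.ker) :
    relRep π hπ (π u) (relClass π w hw) =
      relClass π (u * w * u⁻¹) (π.normal_ker.conj_mem w hw u) := by
  have hact : actG π hπ (π u) = actF π u :=
    π.liftOfRightInverse_comp_apply _ (Function.rightInverse_surjInv hπ)
      ⟨actF π, ker_le_ker_actF π⟩ u
  show Additive.ofMul (actG π hπ (π u) (Abelianization.of ⟨w, hw⟩)) = _
  rw [hact]
  exact congrArg (Additive.ofMul ∘ Abelianization.of)
    (Subtype.ext (by simp [MulAut.conjNormal_apply]))

noncomputable def relFox : Additive (Abelianization π.ker) →+ (X →₀ MonoidAlgebra ℤ G) :=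
  MonoidHom.toAdditiveLeft <| Abelianization.lift <|
    MonoidHom.mk' (fun r => .ofAdd (foxDeriv π r)) fun r s => by
      simp only [Subgroup.coe_mul, foxDeriv_mul, MonoidHom.mem_ker.1 r.2, map_one, one_smul]
      rfl

theorem relFox_relClass (r : FreeGroup X) (hr : r ∈ π.ker) :
    relFox π (relClass π r hr) = foxDeriv π r :=
  rfl

theorem dMap_relFox (a : Additive (Abelianization π.ker)) : dMap π (relFox π a) = 0 := by
  have : (dMap π).toAddMonoidHom.comp (relFox π) = 0 := by
    refine relModule_addHom_ext π fun r hr => ?_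
    change dMap π (relFox π (relClass π r hr)) = 0
    rw [relFox_relClass, dMap_foxDeriv, MonoidHom.mem_ker.1 hr, map_one, sub_self]
  exact DFunLike.congr_fun this a

theorem relFox_relRep (hπ : Function.Surjective π) (u : FreeGroup X)
    (a : Additive (Abelianization π.ker)) :
    relFox π (relRep π hπ (π u) a) = MonoidAlgebra.of ℤ G (π u) • relFox π a := by
  have : (relFox π).comp (relRep π hπ (π u)).toAddMonoidHom =
      (DistribMulAction.toAddMonoidEnd _ _ (MonoidAlgebra.of ℤ G (π u))).comp (relFox π) := by
    refine relModule_addHom_ext π fun r hr => ?_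
    simp [relRep_relClass, relFox_relClass, foxDeriv_conj π hr]
  exact DFunLike.congr_fun this a

noncomputable def relFoxLinear (hπ : Function.Surjective π) :
    (relRep π hπ).asModule →ₗ[MonoidAlgebra ℤ G] (X →₀ MonoidAlgebra ℤ G) :=
  MonoidAlgebra.equivariantOfLinearOfComm
    ((relFox π).toIntLinearMap ∘ₗ (relRep π hπ).asModuleEquiv.toLinearMap) fun g a => by
      obtain ⟨u, rfl⟩ := hπ g
      rw [Representation.single_smul, one_smul]
      exact relFox_relRep π hπ u _

end RelationModule

section Retraction

variable (π : FreeGroup X →* G) (hπ : Function.Surjective π)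

open Classical in
noncomputable def normSection (g : G) : FreeGroup X :=
  if g = 1 then 1 else Function.surjInv hπ g

theorem apply_normSection (g : G) : π (normSection π hπ g) = g := by
  unfold normSection
  split_ifs with h
  · rw [map_one, h]
  · exact Function.surjInv_eq hπ g

theorem normSection_one : normSection π hπ 1 = 1 :=
  if_pos rfl

theorem mul_inv_normSection_mem_ker (f : FreeGroup X) :
    f * (normSection π hπ (π f))⁻¹ ∈ π.ker := by
  rw [MonoidHom.mem_ker, map_mul, map_inv, apply_normSection, mul_inv_cancel]

noncomputable def schreierClass (f : FreeGroup X) : Additive (Abelianization π.ker) :=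
  relClass π _ (mul_inv_normSection_mem_ker π hπ f)

theorem schreierClass_of_mem_ker {w : FreeGroup X} (hw : w ∈ π.ker) :
    schreierClass π hπ w = relClass π w hw :=
  relClass_congr π (by rw [MonoidHom.mem_ker.1 hw, normSection_one, inv_one, mul_one]) _ _

theorem schreierClass_mul (u v : FreeGroup X) :
    schreierClass π hπ (u * v) =
      relRep π hπ (π u) (schreierClass π hπ v) +
        schreierClass π hπ (u * normSection π hπ (π v)) := by
  rw [schreierClass, schreierClass, schreierClass, relRep_relClass, ← relClass_mul]
  apply relClass_congr
  simp only [map_mul, apply_normSection]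
  group

noncomputable def relRetract : (X →₀ MonoidAlgebra ℤ G) →ₗ[ℤ] Additive (Abelianization π.ker) :=
  Finsupp.lsum ℤ fun x => (MonoidAlgebra.basis G ℤ).constr ℤ fun g =>
    schreierClass π hπ (normSection π hπ g * .of x)

noncomputable def schreierShift (u : FreeGroup X) :
    MonoidAlgebra ℤ G →ₗ[ℤ] Additive (Abelianization π.ker) :=
  (MonoidAlgebra.basis G ℤ).constr ℤ fun g => schreierClass π hπ (u * normSection π hπ g)

noncomputable def foxLift : MonoidAlgebra ℤ G →ₗ[ℤ] (X →₀ MonoidAlgebra ℤ G) :=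
  (MonoidAlgebra.basis G ℤ).constr ℤ fun g => foxDeriv π (normSection π hπ g)

theorem relRetract_single (x : X) (g : G) :
    relRetract π hπ (Finsupp.single x (MonoidAlgebra.single g 1)) =
      schreierClass π hπ (normSection π hπ g * .of x) := by
  simp [relRetract, ← MonoidAlgebra.basis_apply]

theorem schreierShift_single (u : FreeGroup X) (g : G) :
    schreierShift π hπ u (MonoidAlgebra.single g 1) =
      schreierClass π hπ (u * normSection π hπ g) := by
  simp [schreierShift, ← MonoidAlgebra.basis_apply]

theorem dMap_single_single (x : X) (g : G) :
    dMap π (Finsupp.single x (MonoidAlgebra.single g 1)) =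
      MonoidAlgebra.single (g * π (.of x)) 1 - MonoidAlgebra.single g 1 := by
  simp [dMap, mul_sub]

theorem relRetract_smul (u : FreeGroup X) (m : X →₀ MonoidAlgebra ℤ G) :
    relRetract π hπ (MonoidAlgebra.of ℤ G (π u) • m) =
      relRep π hπ (π u) (relRetract π hπ m) + schreierShift π hπ u (dMap π m) := by
  have : relRetract π hπ ∘ₗ DistribSMul.toLinearMap ℤ _ (MonoidAlgebra.of ℤ G (π u)) =
      relRep π hπ (π u) ∘ₗ relRetract π hπ +
        schreierShift π hπ u ∘ₗ (dMap π).restrictScalars ℤ := by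
    ext x g : 3
    simp only [LinearMap.comp_apply, LinearMap.add_apply, DistribSMul.toLinearMap_apply,
      Finsupp.lsingle_apply, MonoidAlgebra.lsingle_apply, LinearMap.restrictScalars_apply,
      Finsupp.smul_single, MonoidAlgebra.of_apply, smul_eq_mul, MonoidAlgebra.single_mul_single,
      mul_one, relRetract_single, dMap_single_single, map_sub, schreierShift_single]
    rw [← add_sub_assoc, eq_sub_iff_add_eq, add_comm]
    simp only [schreierClass, relRep_relClass, ← relClass_mul]
    apply relClass_congr
    simp only [map_mul, apply_normSection]
    group
  exact LinearMap.congr_fun this m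

theorem relRetract_foxDeriv (f : FreeGroup X) :
    relRetract π hπ (foxDeriv π f) = schreierClass π hπ f := by
  have := FreeGroup.crossedHom_eq_zero ((relRep π hπ).comp π)
    (d := fun f => relRetract π hπ (foxDeriv π f) - schreierClass π hπ f) ?_ ?_
  · exact sub_eq_zero.1 (congrFun this f)
  · intro u v
    have hshift : schreierShift π hπ u (MonoidAlgebra.of ℤ G (π v) - 1) =
        schreierClass π hπ (u * normSection π hπ (π v)) - schreierClass π hπ u := by
      rw [map_sub, MonoidAlgebra.of_apply, MonoidAlgebra.one_def, schreierShift_single,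
        schreierShift_single, normSection_one, mul_one]
    change _ - _ = _ + relRep π hπ (π u) (_ - _)
    rw [foxDeriv_mul, map_add, relRetract_smul, dMap_foxDeriv, hshift,
      schreierClass_mul π hπ u v, map_sub]
    abel
  · intro x
    rw [foxDeriv_of, MonoidAlgebra.one_def, relRetract_single, normSection_one, one_mul, sub_self]

theorem relRetract_relFox (a : Additive (Abelianization π.ker)) :
    relRetract π hπ (relFox π a) = a := by
  have : (relRetract π hπ).toAddMonoidHom.comp (relFox π) = .id _ := by
    refine relModule_addHom_ext π fun r hr => ?_
    change relRetract π hπ (relFox π (relClass π r hr)) = _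
    rw [relFox_relClass, relRetract_foxDeriv, schreierClass_of_mem_ker π hπ hr]
    rfl
  exact DFunLike.congr_fun this a

theorem foxLift_single (g : G) :
    foxLift π hπ (MonoidAlgebra.single g 1) = foxDeriv π (normSection π hπ g) := by
  simp [foxLift, ← MonoidAlgebra.basis_apply]

theorem relFox_schreierClass (f : FreeGroup X) :
    relFox π (schreierClass π hπ f) = foxDeriv π f - foxDeriv π (normSection π hπ (π f)) :=
  foxDeriv_mul_inv π (apply_normSection π hπ _).symm

theorem relFox_relRetract_add_foxLift_dMap (m : X →₀ MonoidAlgebra ℤ G) :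
    relFox π (relRetract π hπ m) + foxLift π hπ (dMap π m) = m := by
  have : (relFox π).toIntLinearMap ∘ₗ relRetract π hπ +
      foxLift π hπ ∘ₗ (dMap π).restrictScalars ℤ = LinearMap.id := by
    ext x g : 3
    simp only [LinearMap.comp_apply, LinearMap.add_apply, Finsupp.lsingle_apply,
      MonoidAlgebra.lsingle_apply, LinearMap.restrictScalars_apply, AddMonoidHom.coe_toIntLinearMap,
      relRetract_single, relFox_schreierClass, dMap_single_single, map_sub, foxLift_single,
      map_mul, apply_normSection, foxDeriv_mul, foxDeriv_of, LinearMap.id_apply,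
      Finsupp.smul_single, smul_eq_mul, mul_one, MonoidAlgebra.of_apply]
    abel
  exact LinearMap.congr_fun this m

end Retraction

theorem crowell_lyndon_general (π : FreeGroup X →* G) (hπ : Function.Surjective π) :
    -- the image of `ℤ[G]^(X) → ℤ[G]` is exactly the augmentation ideal `IG`, and
    LinearMap.range (dMap π) = RingHom.ker (aug G) ∧
    -- there is an injective `ℤ[G]`-linear map `θ : R̄ → ℤ[G]^(X)` with image
    -- `ker (ℤ[G]^(X) → IG)`, induced by Fox calculus:
    ∃ θ : (relRep π hπ).asModule →ₗ[MonoidAlgebra ℤ G] (X →₀ MonoidAlgebra ℤ G),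
      Function.Injective θ ∧
      LinearMap.range θ = LinearMap.ker (dMap π) ∧
      ∃ fox : FreeGroup X → (X →₀ MonoidAlgebra ℤ G),
        (∀ x : X, fox (FreeGroup.of x) = Finsupp.single x 1) ∧
        (∀ u v : FreeGroup X,
          fox (u * v) = fox u + (MonoidAlgebra.of ℤ G (π u)) • fox v) ∧
        (∀ (r : FreeGroup X) (hr : r ∈ π.ker),
          θ ((relRep π hπ).asModuleEquiv.symm
              (Additive.ofMul (Abelianization.of (⟨r, hr⟩ : ↥π.ker)))) = fox r) := by
  refine ⟨range_dMap_eq_ker_aug π hπ, relFoxLinear π hπ, ?_, ?_, foxDeriv π, foxDeriv_of π,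
    foxDeriv_mul π, fun r hr => relFox_relClass π r hr⟩
  · exact Function.LeftInverse.injective (relRetract_relFox π hπ)
  · refine le_antisymm ?_ fun m hm => ⟨(relRep π hπ).asModuleEquiv.symm (relRetract π hπ m), ?_⟩
    · rintro _ ⟨a, rfl⟩
      exact dMap_relFox π a
    · have := relFox_relRetract_add_foxLift_dMap π hπ m
      rwa [LinearMap.mem_ker.1 hm, map_zero, add_zero] at this

theorem crowell_lyndon [Finite X] (π : FreeGroup X →* G) (hπ : Function.Surjective π) :
    -- the image of `ℤ[G]^(X) → ℤ[G]` is exactly the augmentation ideal `IG`, and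
    LinearMap.range (dMap π) = RingHom.ker (aug G) ∧
    -- there is an injective `ℤ[G]`-linear map `θ : R̄ → ℤ[G]^(X)` with image
    -- `ker (ℤ[G]^(X) → IG)`, induced by Fox calculus:
    ∃ θ : (relRep π hπ).asModule →ₗ[MonoidAlgebra ℤ G] (X →₀ MonoidAlgebra ℤ G),
      Function.Injective θ ∧
      LinearMap.range θ = LinearMap.ker (dMap π) ∧
      ∃ fox : FreeGroup X → (X →₀ MonoidAlgebra ℤ G),
        (∀ x : X, fox (FreeGroup.of x) = Finsupp.single x 1) ∧
        (∀ u v : FreeGroup X,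
          fox (u * v) = fox u + (MonoidAlgebra.of ℤ G (π u)) • fox v) ∧
        (∀ (r : FreeGroup X) (hr : r ∈ π.ker),
          θ ((relRep π hπ).asModuleEquiv.symm
              (Additive.ofMul (Abelianization.of (⟨r, hr⟩ : ↥π.ker)))) = fox r) :=
  crowell_lyndon_general π hπ
end
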